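/- For every y ∈ ℝ^{n+1} there exists λ ∈ [0, 1) such that Q⌊y + λ·1⌉ is a closest point in A_n* to y, i.e., ‖y − Q⌊y + λ·1⌉‖ ≤ ‖y − w‖ for every w ∈ A_n*. -/

import Mathlib

/-- The orthogonal projection onto the hyperplane orthogonal to the all-ones
vector: `(Q x) i = x i - (∑ j, x j) / (n+1)`. -/
noncomputable def Q {n : ℕ} (x : EuclideanSpace ℝ (Fin (n+1))) :
    EuclideanSpace ℝ (Fin (n+1)) :=
  WithLp.toLp 2 (fun i => x i - (∑ j, x j) / (n+1))

/-- The all-ones vector in `ℝ^{n+1}`. -/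
def ones {n : ℕ} : EuclideanSpace ℝ (Fin (n+1)) := WithLp.toLp 2 (fun _ => 1)

/-- Componentwise nearest-integer rounding of a vector (viewed in `ℝ^{n+1}`). -/
noncomputable def roundVec {n : ℕ} (y : EuclideanSpace ℝ (Fin (n+1))) :
    EuclideanSpace ℝ (Fin (n+1)) :=
  WithLp.toLp 2 (fun i => (round (y i) : ℝ))

/-- The lattice `A_n*`: the image under `Q` of the integer vectors in `ℝ^{n+1}`. -/
noncomputable def Anstar (n : ℕ) : Set (EuclideanSpace ℝ (Fin (n+1))) :=
  { x | ∃ k : Fin (n+1) → ℤ, x = Q (WithLp.toLp 2 (fun i => (k i : ℝ))) }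

/-!
Since `y - Q y` is a multiple of `1` and `Q` maps into `1ᗮ`, Pythagoras gives
`‖y - Q u‖² = ‖Q (y - u)‖² + ‖y - Q y‖²`; so `Q u` is the closer to `y` the smaller `‖Q (y - u)‖`,
a quantity that does not change when `y - u` is shifted along `1`. Given an integer vector `k`, let
`μ` be the mean of `y - k` and `λ = ⌈μ⌉ - μ ∈ [0, 1)`. Then `Q (y - k) = (y + λ1) - (k + ⌈μ⌉1)` is
`y + λ1` minus an integer vector, so the rounding `⌊y + λ1⌉` does at least as well as `k`.
Finally, for `λ ∈ [0, 1)` each coordinate of `⌊y + λ1⌉` is `⌊yᵢ⌉` or `⌊yᵢ⌉ + 1`, so only finitely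
many roundings occur and a best one beats every `k`.
-/

lemma round_add_eq_or_of_mem_Ico {α : Type*} [Field α] [LinearOrder α] [IsStrictOrderedRing α]
    [FloorRing α] (x : α) {t : α} (ht : t ∈ Set.Ico 0 1) :
    round (x + t) = round x ∨ round (x + t) = round x + 1 := by
  have hlo : round x ≤ round (x + t) := by
    simp only [round_eq]
    exact Int.floor_mono (by linarith [ht.1])
  have hhi : round (x + t) ≤ round x + 1 := by
    rw [← round_add_one, round_eq, round_eq]
    exact Int.floor_mono (by linarith [ht.2])
  omega

section Projection

open RealInnerProductSpace

variable {n : ℕ}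

lemma Q_apply (x : EuclideanSpace ℝ (Fin (n+1))) (i : Fin (n+1)) :
    Q x i = x i - (∑ j, x j) / (n + 1) := rfl

@[simp] lemma ones_apply (i : Fin (n+1)) : (ones : EuclideanSpace ℝ (Fin (n+1))) i = 1 := rfl

lemma sub_Q (x : EuclideanSpace ℝ (Fin (n+1))) :
    x - Q x = ((∑ j, x j) / (n + 1)) • ones := by
  ext i
  simp [Q_apply]

lemma Q_sub (x z : EuclideanSpace ℝ (Fin (n+1))) : Q (x - z) = Q x - Q z := by
  ext i
  simp only [Q_apply, PiLp.sub_apply, Finset.sum_sub_distrib]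
  ring

lemma Q_add_smul_ones (x : EuclideanSpace ℝ (Fin (n+1))) (c : ℝ) : Q (x + c • ones) = Q x := by
  ext i
  simp only [Q_apply, PiLp.add_apply, PiLp.smul_apply, ones_apply, smul_eq_mul, mul_one,
    Finset.sum_add_distrib, Finset.sum_const, Finset.card_univ, Fintype.card_fin, nsmul_eq_mul]
  field_simp
  push_cast
  ring

lemma sum_Q (x : EuclideanSpace ℝ (Fin (n+1))) : ∑ i, Q x i = 0 := by
  simp only [Q_apply, Finset.sum_sub_distrib, Finset.sum_const, Finset.card_univ,
    Fintype.card_fin, nsmul_eq_mul]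
  field_simp
  push_cast
  ring

lemma inner_Q_smul_ones (x : EuclideanSpace ℝ (Fin (n+1))) (c : ℝ) : ⟪Q x, c • ones⟫ = 0 := by
  simp [PiLp.inner_apply, ← Finset.mul_sum, sum_Q]

lemma norm_Q_le (x : EuclideanSpace ℝ (Fin (n+1))) : ‖Q x‖ ≤ ‖x‖ := by
  have h := norm_add_sq_eq_norm_sq_add_norm_sq_real (inner_Q_smul_ones x ((∑ j, x j) / (n + 1)))
  rw [← sub_Q, add_sub_cancel] at h
  nlinarith [norm_nonneg (Q x), norm_nonneg x]

lemma norm_sub_Q_sq (y u : EuclideanSpace ℝ (Fin (n+1))) :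
    ‖y - Q u‖ ^ 2 = ‖Q (y - u)‖ ^ 2 + ‖y - Q y‖ ^ 2 := by
  have h := norm_add_sq_eq_norm_sq_add_norm_sq_real
    (inner_Q_smul_ones (y - u) ((∑ j, y j) / (n + 1)))
  rw [← sub_Q, Q_sub, sub_add_sub_cancel'] at h
  rw [Q_sub, sq, sq, sq, h]

lemma norm_sub_Q_le_norm_sub_Q_iff (y u w : EuclideanSpace ℝ (Fin (n+1))) :
    ‖y - Q u‖ ≤ ‖y - Q w‖ ↔ ‖Q (y - u)‖ ≤ ‖Q (y - w)‖ := by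
  rw [← sq_le_sq₀ (norm_nonneg _) (norm_nonneg _), ← sq_le_sq₀ (norm_nonneg _) (norm_nonneg _),
    norm_sub_Q_sq y u, norm_sub_Q_sq y w, add_le_add_iff_right]

lemma norm_sub_roundVec_le (x : EuclideanSpace ℝ (Fin (n+1))) (k : Fin (n+1) → ℤ) :
    ‖x - roundVec x‖ ≤ ‖x - WithLp.toLp 2 (fun i => (k i : ℝ))‖ := by
  rw [EuclideanSpace.norm_eq, EuclideanSpace.norm_eq]
  gcongr with i
  simpa [roundVec] using round_le (x i) (k i)

lemma exists_mem_Ico_norm_sub_Q_roundVec_le (y : EuclideanSpace ℝ (Fin (n+1)))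
    (k : Fin (n+1) → ℤ) :
    ∃ t ∈ Set.Ico (0 : ℝ) 1,
      ‖y - Q (roundVec (y + t • ones))‖ ≤ ‖y - Q (WithLp.toLp 2 (fun i => (k i : ℝ)))‖ := by
  set μ := (∑ j, (y - WithLp.toLp 2 (fun i => (k i : ℝ))) j) / (n + 1)
  refine ⟨⌈μ⌉ - μ, ⟨sub_nonneg.2 (Int.le_ceil μ), by linarith [Int.ceil_lt_add_one μ]⟩, ?_⟩
  set z := y + (⌈μ⌉ - μ) • ones
  have hk : Q (y - WithLp.toLp 2 (fun i => (k i : ℝ)))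
      = z - WithLp.toLp 2 (fun i => ((k i + ⌈μ⌉ : ℤ) : ℝ)) := by
    ext i
    rw [Q_apply]
    simp only [z, μ, PiLp.sub_apply, PiLp.add_apply, PiLp.smul_apply, ones_apply, smul_eq_mul]
    push_cast
    ring
  have hz : Q (y - roundVec z) = Q (z - roundVec z) := by
    rw [show z - roundVec z = y - roundVec z + (⌈μ⌉ - μ) • ones by simp only [z]; abel,
      Q_add_smul_ones]
  rw [norm_sub_Q_le_norm_sub_Q_iff, hk, hz]
  exact (norm_Q_le _).trans (norm_sub_roundVec_le z _)

lemma finite_image_roundVec_add_smul_ones (y : EuclideanSpace ℝ (Fin (n+1))) :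
    ((fun t : ℝ => roundVec (y + t • ones)) '' Set.Ico 0 1).Finite := by
  refine ((Set.Finite.pi fun i => Set.toFinite {round (y i), round (y i) + 1}).image
    fun k => (WithLp.toLp 2 (fun i => (k i : ℝ)) : EuclideanSpace ℝ (Fin (n+1)))).subset ?_
  rintro _ ⟨t, ht, rfl⟩
  refine ⟨fun i => round (y i + t), fun i _ => round_add_eq_or_of_mem_Ico (y i) ht, ?_⟩
  ext i
  simp [roundVec]

end Projection

/-- There exists `λ ∈ [0,1)` such that `Q ⌊y + λ·1⌉` is a closest point
in `A_n*` to `y`. -/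
theorem exists_lambda_Ico_closest (n : ℕ) (y : EuclideanSpace ℝ (Fin (n+1))) :
    ∃ lam ∈ Set.Ico (0 : ℝ) 1,
      ∀ w ∈ Anstar n, ‖y - Q (roundVec (y + lam • ones))‖ ≤ ‖y - w‖ := by
  obtain ⟨_, ⟨t, ht, rfl⟩, hmin⟩ :=
    Set.exists_min_image _ (fun u => ‖y - Q u‖) (finite_image_roundVec_add_smul_ones y)
      ((Set.nonempty_Ico.2 zero_lt_one).image _)
  refine ⟨t, ht, ?_⟩
  rintro _ ⟨k, rfl⟩
  obtain ⟨t', ht', hle⟩ := exists_mem_Ico_norm_sub_Q_roundVec_le y k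
  exact (hmin _ ⟨t', ht', rfl⟩).trans hle
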